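/- Let n ≥ 1 and fix δ with 0 < δ < π/2. For each i ∈ ℕ let d_i be the diagonal (n+1)×(n+1) matrix with positive diagonal entries μ_i(0), …, μ_i(n), and assume μ_i(0)/max_{1≤j≤n} μ_i(j) → ∞ as i → ∞. Then the sets {x ∈ Sⁿ : d(d_i·x/‖d_i·x‖, e₀) ≤ δ} (the preimages under the projective action of d_i of the closed δ-ball centered at the first standard basis vector e₀) converge in the Hausdorff distance to the closed hemisphere {x ∈ Sⁿ : ⟨x, e₀⟩ ≥ 0}. (The key dynamical step in the proof of Proposition B.1 of the paper: the preimages of a small ball around the attracting fixed point converge to a closed hemisphere.) -/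

import Mathlib

open scoped RealInnerProductSpace

noncomputable section

/-- `Esp n` is `ℝ^{n+1}` with its standard inner product. -/
abbrev Esp (n : ℕ) : Type := EuclideanSpace ℝ (Fin (n + 1))

/-- The unit sphere `Sⁿ ⊆ ℝ^{n+1}`. -/
def sphereSet (n : ℕ) : Set (Esp n) := {x | ‖x‖ = 1}

/-- A convex segment in `Sⁿ`: `{(cos t)·u + (sin t)·v : 0 ≤ t ≤ a}` for an
orthonormal pair `u, v` and some `a ∈ [0, π]`. -/
def IsConvexSegment {n : ℕ} (S : Set (Esp n)) : Prop :=
  ∃ (u v : Esp n) (a : ℝ), ‖u‖ = 1 ∧ ‖v‖ = 1 ∧ ⟪u, v⟫ = 0 ∧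
    0 ≤ a ∧ a ≤ Real.pi ∧
    S = (fun t : ℝ => Real.cos t • u + Real.sin t • v) '' Set.Icc 0 a

/-- A subset of `Sⁿ` is convex if any two of its points are contained in a
convex segment contained in the set. -/
def SphConvex {n : ℕ} (A : Set (Esp n)) : Prop :=
  ∀ x ∈ A, ∀ y ∈ A, ∃ S : Set (Esp n), IsConvexSegment S ∧ S ⊆ A ∧ x ∈ S ∧ y ∈ S

/-- Convergence of a sequence of subsets of `Sⁿ` in the Hausdorff distance. -/
def HConv {n : ℕ} (K : ℕ → Set (Esp n)) (L : Set (Esp n)) : Prop :=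
  Filter.Tendsto (fun i => Metric.hausdorffDist (K i) L) Filter.atTop (nhds 0)

/-- The spherical distance `d(x, y) = arccos ⟨x, y⟩` on `Sⁿ`. -/
def sdist {n : ℕ} (x y : Esp n) : ℝ := Real.arccos ⟪x, y⟫

/-- The vector `(μ 0 * x 0, …, μ n * x n)`: the action of the diagonal matrix
with diagonal entries `μ` on `x`. -/
def diagVec {n : ℕ} (μ : Fin (n + 1) → ℝ) (x : Esp n) : Esp n :=
  (EuclideanSpace.equiv (Fin (n + 1)) ℝ).symm
    (fun j => μ j * EuclideanSpace.equiv (Fin (n + 1)) ℝ x j)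

/-- The projective map of `Sⁿ` induced by the diagonal matrix with diagonal
entries `μ`: `x ↦ d·x / ‖d·x‖`. -/
def diagAct {n : ℕ} (μ : Fin (n + 1) → ℝ) (x : Esp n) : Esp n :=
  ‖diagVec μ x‖⁻¹ • diagVec μ x

/-!
Write `M` for the largest of `μ 1, …, μ n`. A unit vector `x` with `x 0 > 0` is moved by the
diagonal map into the `δ`-cap around `e₀` as soon as `cos δ · M ≤ sin δ · μ 0 · x 0`, i.e. as soon as
`x 0 ≥ ε := cot δ · M / μ 0`; conversely every point of the preimage of the cap has `x 0 > 0`.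
So the preimage lies in the hemisphere and contains its part `{x 0 ≥ ε}`, which is `4ε`-dense in it:
push a point `y` of the hemisphere towards `e₀` by `2ε` and renormalise. Since `ε → 0`, the
Hausdorff distance tends to `0`.
-/

open Filter Topology Metric

lemma norm_sub_inv_norm_smul_le {E : Type*} [NormedAddCommGroup E] [NormedSpace ℝ E]
    {y : E} (hy : ‖y‖ = 1) (w : E) : ‖y - ‖w‖⁻¹ • w‖ ≤ 2 * ‖y - w‖ := by
  rcases eq_or_ne w 0 with rfl | hw
  · simp [hy]
  have hrescale : ‖w - ‖w‖⁻¹ • w‖ = |‖w‖ - ‖y‖| := by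
    have hmul : (1 - ‖w‖⁻¹) * ‖w‖ = ‖w‖ - 1 := by field_simp
    rw [show w - ‖w‖⁻¹ • w = (1 - ‖w‖⁻¹) • w by rw [sub_smul, one_smul], norm_smul,
      Real.norm_eq_abs, hy, ← hmul, abs_mul, abs_norm]
  calc ‖y - ‖w‖⁻¹ • w‖ ≤ ‖y - w‖ + ‖w - ‖w‖⁻¹ • w‖ := norm_sub_le_norm_sub_add_norm_sub _ _ _
    _ ≤ ‖y - w‖ + ‖w - y‖ := by rw [hrescale]; gcongr; exact abs_norm_sub_norm_le w y
    _ = 2 * ‖y - w‖ := by rw [norm_sub_rev w y]; ring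

lemma sdist_le_of_cos_le {n : ℕ} {x y : Esp n} {δ : ℝ} (h : Real.cos δ ≤ ⟪x, y⟫)
    (hδ0 : 0 ≤ δ) (hδπ : δ ≤ Real.pi) : sdist x y ≤ δ :=
  (Real.arccos_le_arccos h).trans_eq (Real.arccos_cos hδ0 hδπ)

section DiagonalAction

variable {n : ℕ} {μ : Fin (n + 1) → ℝ} {M δ : ℝ}

local notation "e₀" => EuclideanSpace.single 0 1

def hemisphere (n : ℕ) : Set (Esp n) := {x ∈ sphereSet n | 0 ≤ ⟪x, e₀⟫}

def capPreimage (μ : Fin (n + 1) → ℝ) (δ : ℝ) : Set (Esp n) :=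
  {x ∈ sphereSet n | sdist (diagAct μ x) e₀ ≤ δ}

lemma inner_single_zero (x : Esp n) : ⟪x, e₀⟫ = x 0 := by
  simp [EuclideanSpace.inner_single_right]

lemma norm_diagVec_sq (μ : Fin (n + 1) → ℝ) (x : Esp n) :
    ‖diagVec μ x‖ ^ 2 = (μ 0 * x 0) ^ 2 + ∑ j : Fin n, (μ j.succ * x j.succ) ^ 2 := by
  rw [EuclideanSpace.real_norm_sq_eq, Fin.sum_univ_succ]
  rfl

lemma norm_diagVec_sq_le (hM : ∀ j ≠ 0, |μ j| ≤ M) (x : Esp n) :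
    ‖diagVec μ x‖ ^ 2 ≤ (μ 0 * x 0) ^ 2 + M ^ 2 * ‖x‖ ^ 2 := by
  have htail : ∑ j : Fin n, (μ j.succ * x j.succ) ^ 2 ≤ M ^ 2 * ∑ j : Fin n, x j.succ ^ 2 := by
    rw [Finset.mul_sum]
    gcongr with j
    rw [mul_pow]
    exact mul_le_mul_of_nonneg_right (sq_le_sq.2
      ((hM _ j.succ_ne_zero).trans (le_abs_self M))) (sq_nonneg _)
  have hx : ∑ j : Fin n, x j.succ ^ 2 ≤ ‖x‖ ^ 2 := by
    rw [EuclideanSpace.real_norm_sq_eq, Fin.sum_univ_succ]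
    exact le_add_of_nonneg_left (sq_nonneg _)
  rw [norm_diagVec_sq]
  nlinarith [mul_le_mul_of_nonneg_left hx (sq_nonneg M)]

lemma inner_diagAct_single_zero (μ : Fin (n + 1) → ℝ) (x : Esp n) :
    ⟪diagAct μ x, e₀⟫ = ‖diagVec μ x‖⁻¹ * (μ 0 * x 0) := by
  rw [inner_single_zero]
  rfl

lemma cos_le_inner_diagAct {x : Esp n} (hx : ‖x‖ = 1) (hM0 : 0 ≤ M) (hM : ∀ j ≠ 0, |μ j| ≤ M)
    (hcos : 0 ≤ Real.cos δ) (hx0 : 0 < μ 0 * x 0)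
    (h : Real.cos δ * M ≤ Real.sin δ * (μ 0 * x 0)) :
    Real.cos δ ≤ ⟪diagAct μ x, e₀⟫ := by
  have hpos : 0 < ‖diagVec μ x‖ := by
    have : 0 < ‖diagVec μ x‖ ^ 2 := by rw [norm_diagVec_sq]; positivity
    nlinarith [norm_nonneg (diagVec μ x)]
  have hsq : (Real.cos δ * ‖diagVec μ x‖) ^ 2 ≤ (μ 0 * x 0) ^ 2 :=
    calc (Real.cos δ * ‖diagVec μ x‖) ^ 2
        ≤ Real.cos δ ^ 2 * ((μ 0 * x 0) ^ 2 + M ^ 2) := by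
          rw [mul_pow]; gcongr; simpa [hx] using norm_diagVec_sq_le hM x
      _ = Real.cos δ ^ 2 * (μ 0 * x 0) ^ 2 + (Real.cos δ * M) ^ 2 := by ring
      _ ≤ Real.cos δ ^ 2 * (μ 0 * x 0) ^ 2 + (Real.sin δ * (μ 0 * x 0)) ^ 2 := by gcongr
      _ = (μ 0 * x 0) ^ 2 := by linear_combination (μ 0 * x 0) ^ 2 * Real.sin_sq_add_cos_sq δ
  have hle := (pow_le_pow_iff_left₀ (by positivity) hx0.le two_ne_zero).1 hsq
  rw [inner_diagAct_single_zero, inv_mul_eq_div, le_div_iff₀ hpos]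
  linarith

lemma coord_zero_pos_of_sdist_diagAct_lt {x : Esp n} (hμ0 : 0 < μ 0)
    (h : sdist (diagAct μ x) e₀ < Real.pi / 2) : 0 < x 0 := by
  rw [sdist, Real.arccos_lt_pi_div_two, inner_diagAct_single_zero] at h
  exact pos_of_mul_pos_right (pos_of_mul_pos_right h (by positivity)) hμ0.le

lemma capPreimage_subset_hemisphere (hμ0 : 0 < μ 0) (hδ : δ < Real.pi / 2) :
    capPreimage μ δ ⊆ hemisphere n := fun x ⟨hx, hxδ⟩ =>
  ⟨hx, (inner_single_zero x).symm ▸ (coord_zero_pos_of_sdist_diagAct_lt hμ0 (hxδ.trans_lt hδ)).le⟩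

lemma exists_near_of_coord_zero_nonneg {y : Esp n} (hy : ‖y‖ = 1) (hy0 : 0 ≤ y 0) {ε : ℝ}
    (hε0 : 0 < ε) (hε : ε ≤ 1 / 2) : ∃ x : Esp n, ‖x‖ = 1 ∧ ε ≤ x 0 ∧ dist x y ≤ 4 * ε := by
  set w : Esp n := y + (2 * ε) • e₀
  have hw0 : w 0 = y 0 + 2 * ε := by simp [w]
  have hw_le : ‖w‖ ≤ 1 + 2 * ε :=
    (norm_add_le _ _).trans_eq (by simp [hy, norm_smul, abs_of_pos hε0])
  have hw_pos : 0 < ‖w‖ :=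
    (by linarith : 0 < w 0).trans_le ((le_abs_self _).trans (PiLp.norm_apply_le w 0))
  refine ⟨‖w‖⁻¹ • w, norm_smul_inv_norm (norm_pos_iff.1 hw_pos), ?_, ?_⟩
  · change ε ≤ ‖w‖⁻¹ * w 0
    rw [hw0, inv_mul_eq_div, le_div_iff₀ hw_pos]
    nlinarith [mul_le_mul_of_nonneg_left hw_le hε0.le]
  · calc dist (‖w‖⁻¹ • w) y = ‖y - ‖w‖⁻¹ • w‖ := by rw [dist_comm, dist_eq_norm]
      _ ≤ 2 * ‖y - w‖ := norm_sub_inv_norm_smul_le hy w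
      _ = 4 * ε := by simp [w, norm_smul, abs_of_pos hε0]; ring

lemma hausdorffDist_capPreimage_hemisphere_le (hμ : ∀ j, 0 < μ j) (hM0 : 0 ≤ M)
    (hM : ∀ j ≠ 0, μ j ≤ M) (hδ0 : 0 < δ) (hδ : δ < Real.pi / 2) {ε : ℝ} (hε0 : 0 < ε)
    (hε : ε ≤ 1 / 2) (hεM : Real.cos δ * M ≤ Real.sin δ * (μ 0 * ε)) :
    hausdorffDist (capPreimage μ δ) (hemisphere n) ≤ 4 * ε := by
  have hsin : 0 < Real.sin δ := Real.sin_pos_of_pos_of_lt_pi hδ0 (by linarith)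
  have hcos : 0 ≤ Real.cos δ := Real.cos_nonneg_of_mem_Icc ⟨by linarith, hδ.le⟩
  refine hausdorffDist_le_of_mem_dist (by positivity)
    (fun x hx => ⟨x, capPreimage_subset_hemisphere (hμ 0) hδ hx, by simp; positivity⟩) ?_
  rintro y ⟨hy, hy0⟩
  rw [inner_single_zero] at hy0
  obtain ⟨x, hx, hεx, hxy⟩ := exists_near_of_coord_zero_nonneg hy hy0 hε0 hε
  have hcap : Real.cos δ * M ≤ Real.sin δ * (μ 0 * x 0) := hεM.trans (by gcongr; exact (hμ 0).le)
  refine ⟨x, ⟨hx, sdist_le_of_cos_le ?_ hδ0.le (by linarith)⟩, by rwa [dist_comm]⟩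
  exact cos_le_inner_diagAct hx hM0 (fun j hj => (abs_of_pos (hμ j)).trans_le (hM j hj)) hcos
    (mul_pos (hμ 0) (hε0.trans_le hεx)) hcap

end DiagonalAction

theorem diag_preimage_ball_tendsto_hemisphere_general (n : ℕ)
    (δ : ℝ) (hδ0 : 0 < δ) (hδ : δ < Real.pi / 2)
    (μ : ℕ → Fin (n + 1) → ℝ) (hpos : ∀ i j, 0 < μ i j)
    (hratio : Filter.Tendsto
      (fun i => μ i 0 / sSup {r : ℝ | ∃ j : Fin (n + 1), j ≠ 0 ∧ r = μ i j})
      Filter.atTop Filter.atTop) :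
    HConv
      (fun i => {x ∈ sphereSet n |
        sdist (diagAct (μ i) x) (EuclideanSpace.single 0 1) ≤ δ})
      {x ∈ sphereSet n | 0 ≤ ⟪x, EuclideanSpace.single 0 1⟫} := by
  set M := fun i => sSup {r : ℝ | ∃ j : Fin (n + 1), j ≠ 0 ∧ r = μ i j}
  have hM : ∀ i, ∀ j ≠ 0, μ i j ≤ M i := fun i j hj =>
    le_csSup ((Set.finite_range (μ i)).subset (by rintro _ ⟨j, -, rfl⟩; exact ⟨j, rfl⟩)).bddAbove
      ⟨j, hj, rfl⟩
  have hM0 : ∀ i, 0 ≤ M i := fun i => Real.sSup_nonneg (by rintro _ ⟨j, -, rfl⟩; exact (hpos i j).le)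
  have hsin : 0 < Real.sin δ := Real.sin_pos_of_pos_of_lt_pi hδ0 (by linarith)
  have hcot : 0 < Real.cos δ / Real.sin δ :=
    div_pos (Real.cos_pos_of_mem_Ioo ⟨by linarith, hδ⟩) hsin
  have hε : Tendsto (fun i => Real.cos δ / Real.sin δ / (μ i 0 / M i)) atTop (𝓝 0) :=
    tendsto_const_nhds.div_atTop hratio
  refine squeeze_zero' (Eventually.of_forall fun _ => hausdorffDist_nonneg) ?_
    (by simpa using hε.const_mul 4)
  filter_upwards [hratio.eventually_gt_atTop 0, hε.eventually (eventually_le_nhds one_half_pos)]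
    with i hr hhalf
  refine hausdorffDist_capPreimage_hemisphere_le (hpos i) (hM0 i) (hM i) hδ0 hδ (div_pos hcot hr)
    hhalf (le_of_eq ?_)
  field_simp [hsin.ne', (hpos i 0).ne']

/-- The key dynamical step in Proposition B.1: if the ratio of the first
diagonal entry of `d i` to the maximum of the others tends to infinity, then
the preimages under the projective actions of the `d i` of the closed `δ`-ball
centered at the attracting fixed point `e₀` converge in the Hausdorff distance
to the closed hemisphere `{x ∈ Sⁿ : ⟨x, e₀⟩ ≥ 0}`. -/
theorem diag_preimage_ball_tendsto_hemisphere (n : ℕ) (hn : 1 ≤ n)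
    (δ : ℝ) (hδ0 : 0 < δ) (hδ : δ < Real.pi / 2)
    (μ : ℕ → Fin (n + 1) → ℝ) (hpos : ∀ i j, 0 < μ i j)
    (hratio : Filter.Tendsto
      (fun i => μ i 0 / sSup {r : ℝ | ∃ j : Fin (n + 1), j ≠ 0 ∧ r = μ i j})
      Filter.atTop Filter.atTop) :
    HConv
      (fun i => {x ∈ sphereSet n |
        sdist (diagAct (μ i) x) (EuclideanSpace.single 0 1) ≤ δ})
      {x ∈ sphereSet n | 0 ≤ ⟪x, EuclideanSpace.single 0 1⟫} :=
  diag_preimage_ball_tendsto_hemisphere_general n δ hδ0 hδ μ hpos hratio
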